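/- arXiv:0910.3071 — 5 statements merged into one kernel-verified Lean document; each statement's English description precedes it below -/
import Mathlib

section
/- Let p > 1 and let G = (V,E) be a connected, locally finite simple graph with uniformly bounded vertex degrees. Let f : V → ℝ satisfy f ∈ ℓ^p(V), D_p(f) < ∞, and Δ_p f ∈ ℓ^{p'}(V), where p' = p/(p−1). Then ⟨f, Δ_p f⟩ = −D_p(f). -/
/-! Write `φ(a) = |a| ^ (p - 2) a`. Then `⟨f, Δ_p f⟩` is the sum of `φ(f u - f v) f v` over
ordered pairs of adjacent vertices `(u, v)`. Since `|φ(a) b| ≤ |a| ^ p + |b| ^ p` and degrees are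
bounded, this double sum converges absolutely, so it may be reordered. Pairing `(u, v)` with
`(v, u)` and using that `φ` is odd gives `φ(a) f v + φ(-a) f u = -φ(a) a = -|a| ^ p` with
`a = f u - f v`, which sums to `-2 D_p(f)`. -/

open Filter Topology Metric
open scoped ENNReal Classical

/-- The `p`-Dirichlet energy of `f`: half the sum of `|f u - f v| ^ p` over
ordered pairs of adjacent vertices. -/
noncomputable def dirichletEnergy {V : Type*} (G : SimpleGraph V) (p : ℝ) (f : V → ℝ) : ℝ :=
  (1 / 2) * ∑' q : {q : V × V // G.Adj q.1 q.2}, |f q.1.1 - f q.1.2| ^ p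

/-- `f` is `p`-Dirichlet, i.e. `D_p(f) < ∞`. -/
def DirichletSummable {V : Type*} (G : SimpleGraph V) (p : ℝ) (f : V → ℝ) : Prop :=
  Summable fun q : {q : V × V // G.Adj q.1 q.2} => |f q.1.1 - f q.1.2| ^ p

/-- `G` is `p`-parabolic: for some vertex `v₀`, the infimum of `D_p(f)` over finitely
supported `f` with `f v₀ = 1` equals `0`. -/
def Parabolic {V : Type*} (G : SimpleGraph V) (p : ℝ) : Prop :=
  ∃ v₀ : V, ∀ ε : ℝ, 0 < ε → ∃ f : V → ℝ,
    (Function.support f).Finite ∧ f v₀ = 1 ∧ dirichletEnergy G p f < ε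

/-- The `p`-Laplacian `Δ_p f (v) = Σ_{u ~ v} |f u - f v| ^ (p-2) (f u - f v)`. -/
noncomputable def pLaplacian {V : Type*} (G : SimpleGraph V) (p : ℝ) (f : V → ℝ) (v : V) : ℝ :=
  ∑' u, if G.Adj u v then |f u - f v| ^ (p - 2) * (f u - f v) else 0

/-- `f` is `p`-harmonic: `Δ_p f = 0` everywhere. -/
def IsPHarmonic {V : Type*} (G : SimpleGraph V) (p : ℝ) (f : V → ℝ) : Prop :=
  ∀ v, pLaplacian G p f v = 0

/-- `G` is locally finite. -/
def LocFin {V : Type*} (G : SimpleGraph V) : Prop := ∀ v, (G.neighborSet v).Finite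

/-- `G` has uniformly bounded vertex degrees. -/
def BddDeg {V : Type*} (G : SimpleGraph V) : Prop := ∃ D : ℕ, ∀ v, (G.neighborSet v).ncard ≤ D

/-- A quasi-sphere packing of `G` in `ℝ^d` with constant `C`. -/
def IsQuasiSpherePacking {V : Type*} (G : SimpleGraph V) (d : ℕ) (C : ℝ)
    (P : V → Set (EuclideanSpace ℝ (Fin d))) : Prop :=
  (∀ v, IsCompact (P v)) ∧
  (∃ (z : V → EuclideanSpace ℝ (Fin d)) (r : V → ℝ),
    ∀ v, 0 < r v ∧ closedBall (z v) (r v) ⊆ P v ∧ P v ⊆ closedBall (z v) (C * r v)) ∧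
  (Pairwise fun u v => Disjoint (interior (P u)) (interior (P v))) ∧
  (∀ u v, u ≠ v → ((P u ∩ P v).Nonempty ↔ G.Adj u v))

/-- `G` is quasi-sphere packable in `ℝ^d`. -/
def QuasiSpherePackable {V : Type*} (G : SimpleGraph V) (d : ℕ) : Prop :=
  ∃ C : ℝ, 1 ≤ C ∧ ∃ P : V → Set (EuclideanSpace ℝ (Fin d)), IsQuasiSpherePacking G d C P

/-- The `m`-length of a finite walk: the sum of `m` over its edges. -/
noncomputable def walkLength {V : Type*} {G : SimpleGraph V} (m : Sym2 V → ℝ) {u v : V}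
    (w : G.Walk u v) : ℝ :=
  (w.edges.map m).sum

/-- The distance `d_m(u,v)`: the infimum of `m`-lengths of walks joining `u` and `v`. -/
noncomputable def graphDist {V : Type*} (G : SimpleGraph V) (m : Sym2 V → ℝ) (u v : V) : ℝ :=
  sInf {L : ℝ | ∃ w : G.Walk u v, walkLength m w = L}

/-- `m` is an `L^p` metric on `G`: positive on edges, with `Σ_e m(e)^p < ∞`. -/
def IsLpMetric {V : Type*} (G : SimpleGraph V) (p : ℝ) (m : Sym2 V → ℝ) : Prop :=
  (∀ e ∈ G.edgeSet, 0 < m e) ∧ Summable fun e : G.edgeSet => m (e : Sym2 V) ^ p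

/-- `γ : ℕ → V` is a half-infinite (self-avoiding) path in `G`. -/
def IsInfPath {V : Type*} (G : SimpleGraph V) (γ : ℕ → V) : Prop :=
  (∀ n, G.Adj (γ n) (γ (n + 1))) ∧ Function.Injective γ

/-- The `m`-length of an infinite path. -/
noncomputable def pathLength {V : Type*} (m : Sym2 V → ℝ) (γ : ℕ → V) : ℝ≥0∞ :=
  ∑' n, ENNReal.ofReal (m s(γ n, γ (n + 1)))

/-- A family of infinite paths is `p`-null if some `L^p` metric gives all of them
infinite length. -/
def IsPNull {V : Type*} (G : SimpleGraph V) (p : ℝ) (Γ : Set (ℕ → V)) : Prop :=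
  ∃ m : Sym2 V → ℝ, IsLpMetric G p m ∧ ∀ γ ∈ Γ, pathLength m γ = ⊤

/-- `x` is a `d_m`-Cauchy sequence of vertices. -/
def CauchyIn {V : Type*} (G : SimpleGraph V) (m : Sym2 V → ℝ) (x : ℕ → V) : Prop :=
  ∀ ε : ℝ, 0 < ε → ∃ N, ∀ j ≥ N, ∀ k ≥ N, graphDist G m (x j) (x k) < ε

/-- `x` converges to a vertex of `G` in the metric `d_m`. -/
def ConvergesToVertex {V : Type*} (G : SimpleGraph V) (m : Sym2 V → ℝ) (x : ℕ → V) : Prop :=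
  ∃ v : V, Tendsto (fun n => graphDist G m (x n) v) atTop (𝓝 0)

/-- `m` is a `p`-resolving metric: it is `L^p`, and for every boundary point of the
`d_m`-completion (represented by a Cauchy sequence of vertices not converging to any
vertex), the family of infinite paths converging to that boundary point is `p`-null. -/
def IsResolving {V : Type*} (G : SimpleGraph V) (p : ℝ) (m : Sym2 V → ℝ) : Prop :=
  IsLpMetric G p m ∧
  ∀ x : ℕ → V, CauchyIn G m x → ¬ ConvergesToVertex G m x →
    IsPNull G p
      {γ | IsInfPath G γ ∧ Tendsto (fun n => graphDist G m (γ n) (x n)) atTop (𝓝 0)}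

/-- `G` is `p`-resolvable. -/
def Resolvable {V : Type*} (G : SimpleGraph V) (p : ℝ) : Prop :=
  ∃ m : Sym2 V → ℝ, IsResolving G p m

/-- `|df(e)|` for an unordered edge. -/
noncomputable def edgeAbsDiff {V : Type*} (f : V → ℝ) : Sym2 V → ℝ :=
  Sym2.lift ⟨fun u v => |f u - f v|, fun u v => abs_sub_comm (f u) (f v)⟩

/-- The graph on `ℤ^n`, two lattice points adjacent iff their `ℓ¹` distance is `1`. -/
def latticeGraph (n : ℕ) : SimpleGraph (Fin n → ℤ) where
  Adj x y := (∑ i, |x i - y i|) = 1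
  symm := by
    constructor
    intro x y h
    rw [← h]
    exact Finset.sum_congr rfl fun i _ => abs_sub_comm _ _
  loopless := by
    constructor
    intro x h
    simp at h

/-- The graph on `ℤ` where `n` is adjacent to `n ± 1`. -/
def zGraph : SimpleGraph ℤ where
  Adj a b := a = b + 1 ∨ b = a + 1
  symm := ⟨fun a b h => h.symm⟩
  loopless := ⟨fun a h => by rcases h with h | h <;> omega⟩

/-- The flux `|a| ^ (p - 1) sgn a` of the `p`-Laplacian; it vanishes at `a = 0` for every `p`. -/
noncomputable def signedRPow (p a : ℝ) : ℝ := |a| ^ (p - 2) * a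

lemma signedRPow_neg (p a : ℝ) : signedRPow p (-a) = -signedRPow p a := by
  simp [signedRPow]

lemma signedRPow_mul_self {p : ℝ} (hp : p ≠ 0) (a : ℝ) : signedRPow p a * a = |a| ^ p := by
  rcases eq_or_ne a 0 with rfl | ha
  · simp [signedRPow, Real.zero_rpow hp]
  · have ha' : 0 < |a| := abs_pos.mpr ha
    calc signedRPow p a * a = |a| ^ (p - 2) * |a| ^ (2 : ℝ) := by
          rw [signedRPow, Real.rpow_two, sq_abs]; ring
      _ = |a| ^ p := by rw [← Real.rpow_add ha', sub_add_cancel]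

lemma abs_signedRPow {p : ℝ} (hp : p ≠ 1) (a : ℝ) : |signedRPow p a| = |a| ^ (p - 1) := by
  have hp' : p - 2 + 1 ≠ 0 := by contrapose! hp; linarith
  rw [signedRPow, abs_mul, abs_of_nonneg (Real.rpow_nonneg (abs_nonneg a) _),
    ← Real.rpow_add_one' (abs_nonneg a) hp']
  ring_nf

lemma rpow_sub_one_mul_le_add_rpow {p : ℝ} (hp : 1 ≤ p) {a b : ℝ} (ha : 0 ≤ a) (hb : 0 ≤ b) :
    a ^ (p - 1) * b ≤ a ^ p + b ^ p := by
  have hp0 : p - 1 + 1 ≠ 0 := by linarith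
  rcases le_total a b with hab | hba
  · calc a ^ (p - 1) * b ≤ b ^ (p - 1) * b := by gcongr
      _ = b ^ p := by rw [← Real.rpow_add_one' hb hp0, sub_add_cancel]
      _ ≤ a ^ p + b ^ p := le_add_of_nonneg_left (Real.rpow_nonneg ha p)
  · calc a ^ (p - 1) * b ≤ a ^ (p - 1) * a := by gcongr
      _ = a ^ p := by rw [← Real.rpow_add_one' ha hp0, sub_add_cancel]
      _ ≤ a ^ p + b ^ p := le_add_of_nonneg_right (Real.rpow_nonneg hb p)

lemma abs_signedRPow_mul_le {p : ℝ} (hp : 1 < p) (a b : ℝ) :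
    |signedRPow p a * b| ≤ |a| ^ p + |b| ^ p := by
  rw [abs_mul, abs_signedRPow hp.ne']
  exact rpow_sub_one_mul_le_add_rpow hp.le (abs_nonneg a) (abs_nonneg b)

lemma tsum_eq_half_tsum_add_comp_equiv {α : Type*} {g : α → ℝ} (hg : Summable g) (σ : α ≃ α) :
    ∑' x, g x = (1 / 2) * ∑' x, (g x + g (σ x)) := by
  have hsplit : ∑' x, (g x + g (σ x)) = ∑' x, g x + ∑' x, g (σ x) :=
    hg.tsum_add (σ.summable_iff.mpr hg)
  rw [hsplit, σ.tsum_eq g]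
  ring

namespace SimpleGraph

variable {V : Type*} (G : SimpleGraph V)

def adjSwap : {q : V × V // G.Adj q.1 q.2} ≃ {q : V × V // G.Adj q.1 q.2} where
  toFun q := ⟨q.1.swap, q.2.symm⟩
  invFun q := ⟨q.1.swap, q.2.symm⟩
  left_inv _ := rfl
  right_inv _ := rfl

lemma summable_adj_comp_snd (hlf : LocFin G) (hbd : BddDeg G) {h : V → ℝ}
    (h0 : ∀ v, 0 ≤ h v) (hs : Summable h) :
    Summable fun q : {q : V × V // G.Adj q.1 q.2} => h q.1.2 := by
  obtain ⟨D, hD⟩ := hbd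
  let e : (Σ v : V, G.neighborSet v) ≃ {q : V × V // G.Adj q.1 q.2} :=
    { toFun := fun x => ⟨(x.2.1, x.1), x.2.2.symm⟩
      invFun := fun q => ⟨q.1.2, ⟨q.1.1, q.2.symm⟩⟩
      left_inv := fun _ => rfl
      right_inv := fun _ => rfl }
  rw [← e.summable_iff]
  refine (summable_sigma_of_nonneg fun x => h0 x.1).mpr ⟨fun v => ?_, ?_⟩
  · have := (hlf v).to_subtype
    exact Summable.of_finite
  · refine (hs.mul_left (D : ℝ)).of_nonneg_of_le (fun v => tsum_nonneg fun _ => h0 v) fun v => ?_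
    have := (hlf v).to_subtype
    show ∑' _ : G.neighborSet v, h v ≤ D * h v
    rw [tsum_const, Nat.card_coe_set_eq, nsmul_eq_mul]
    exact mul_le_mul_of_nonneg_right (by exact_mod_cast hD v) (h0 v)

lemma tsum_tsum_ite_adj {F : V → V → ℝ}
    (hF : Summable fun q : {q : V × V // G.Adj q.1 q.2} => F q.1.1 q.1.2) :
    ∑' v, ∑' u, (if G.Adj u v then F u v else 0) =
      ∑' q : {q : V × V // G.Adj q.1 q.2}, F q.1.1 q.1.2 := by
  let T : V × V → ℝ := {q | G.Adj q.1 q.2}.indicator fun q => F q.1 q.2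
  have hT : Summable T := summable_subtype_iff_indicator.mp hF
  have hTswap : Summable fun q : V × V => T q.swap := (Equiv.prodComm V V).summable_iff.mpr hT
  calc ∑' v, ∑' u, (if G.Adj u v then F u v else 0) = ∑' q : V × V, T q.swap :=
        (hTswap.tsum_prod' hTswap.prod_factor).symm
    _ = ∑' q : V × V, T q := (Equiv.prodComm V V).tsum_eq T
    _ = _ := (tsum_subtype _ _).symm

end SimpleGraph

theorem inner_pLaplacian_self_general {V : Type*} (p : ℝ) (hp : 1 < p) (G : SimpleGraph V)
    (hlf : LocFin G) (hbd : BddDeg G) (f : V → ℝ)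
    (hf : Summable fun v => |f v| ^ p) (hD : DirichletSummable G p f) :
    (∑' v, f v * pLaplacian G p f v) = - dirichletEnergy G p f := by
  let F : V → V → ℝ := fun u v => signedRPow p (f u - f v) * f v
  let g : {q : V × V // G.Adj q.1 q.2} → ℝ := fun q => F q.1.1 q.1.2
  have hg : Summable g := by
    refine .of_norm_bounded (hD.add (G.summable_adj_comp_snd hlf hbd
      (fun v => Real.rpow_nonneg (abs_nonneg (f v)) p) hf)) fun q => ?_
    exact abs_signedRPow_mul_le hp _ _
  have hinner : ∑' v, f v * pLaplacian G p f v = ∑' q, g q := by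
    rw [← G.tsum_tsum_ite_adj (F := F) hg]
    refine tsum_congr fun v => ?_
    rw [pLaplacian, ← tsum_mul_left]
    refine tsum_congr fun u => ?_
    split_ifs
    · simp only [F, signedRPow]; ring
    · rw [mul_zero]
  have hpair : ∀ q, g q + g (G.adjSwap q) = -|f q.1.1 - f q.1.2| ^ p := fun q => by
    simp only [g, F, SimpleGraph.adjSwap, Equiv.coe_fn_mk, Prod.fst_swap, Prod.snd_swap]
    rw [← neg_sub (f q.1.1), signedRPow_neg, ← signedRPow_mul_self (by linarith : p ≠ 0)]
    ring
  rw [hinner, tsum_eq_half_tsum_add_comp_equiv hg G.adjSwap, tsum_congr hpair, tsum_neg,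
    dirichletEnergy]
  ring

/-- For `f ∈ ℓ^p` with `D_p(f) < ∞` and `Δ_p f ∈ ℓ^{p'}`,
`⟨f, Δ_p f⟩ = -D_p(f)`. -/
theorem inner_pLaplacian_self {V : Type*} (p : ℝ) (hp : 1 < p) (G : SimpleGraph V)
    (hconn : G.Connected) (hlf : LocFin G) (hbd : BddDeg G) (f : V → ℝ)
    (hf : Summable fun v => |f v| ^ p) (hD : DirichletSummable G p f)
    (hΔ : Summable fun v => |pLaplacian G p f v| ^ (p / (p - 1))) :
    (∑' v, f v * pLaplacian G p f v) = - dirichletEnergy G p f :=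
  inner_pLaplacian_self_general p hp G hlf hbd f hf hD
end

section
/- Let p > 1 and let G = (V,E) be a connected, locally finite simple graph with uniformly bounded vertex degrees. If f : V → ℝ is p-harmonic, D_p(f) < ∞, and f ∈ ℓ^p(V), then f is constant. -/
open Filter Topology Metric
open scoped ENNReal Classical

/-! Summation by parts. With `φ(x) = |x|^{p-2} x`, bounded degrees, `f ∈ ℓ^p` and Young's
inequality make `Σ_{u ~ v} f(v) φ(f(u) - f(v))` absolutely convergent; summing over `u` first,
it vanishes by `p`-harmonicity, and so does its mirror image `Σ_{u ~ v} f(u) φ(f(u) - f(v))`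
since `φ` is odd. Their difference is `Σ_{u ~ v} |f(u) - f(v)|^p = 2 D_p(f)`, so `f` is constant
along edges, hence constant on the connected graph. -/

/-- `signedPow p x = sign x * |x| ^ (p - 1)`, the nonlinearity of the `p`-Laplacian. -/
noncomputable def signedPow (p x : ℝ) : ℝ := |x| ^ (p - 2) * x

theorem signedPow_neg (p x : ℝ) : signedPow p (-x) = -signedPow p x := by
  simp only [signedPow, abs_neg, mul_neg]

theorem abs_signedPow {p : ℝ} (hp : p ≠ 1) (x : ℝ) : |signedPow p x| = |x| ^ (p - 1) := by
  rcases eq_or_ne x 0 with rfl | hx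
  · simp [signedPow, Real.zero_rpow (sub_ne_zero.2 hp)]
  rw [signedPow, abs_mul, abs_of_nonneg (by positivity), ← Real.rpow_add_one (abs_ne_zero.2 hx)]
  ring_nf

theorem mul_signedPow_self {p : ℝ} (hp : p ≠ 0) (x : ℝ) : x * signedPow p x = |x| ^ p := by
  rcases eq_or_ne x 0 with rfl | hx
  · simp [signedPow, Real.zero_rpow hp]
  have ha : |x| ≠ 0 := abs_ne_zero.2 hx
  calc x * signedPow p x = |x| ^ (p - 2) * |x| * |x| := by
        rw [mul_assoc, abs_mul_abs_self, signedPow]; ring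
    _ = |x| ^ (p - 2 + 1 + 1) := by rw [Real.rpow_add_one ha, Real.rpow_add_one ha]
    _ = |x| ^ p := by ring_nf

theorem abs_mul_signedPow_le {p q : ℝ} (hpq : p.HolderConjugate q) (a x : ℝ) :
    |a * signedPow p x| ≤ |a| ^ p / p + |x| ^ p / q := by
  rw [abs_mul, abs_signedPow hpq.lt.ne']
  calc |a| * |x| ^ (p - 1) ≤ |a| ^ p / p + (|x| ^ (p - 1)) ^ q / q :=
        Real.young_inequality_of_nonneg (abs_nonneg a) (by positivity) hpq
    _ = |a| ^ p / p + |x| ^ p / q := by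
        rw [← Real.rpow_mul (abs_nonneg x), hpq.sub_one_mul_conj]

section AdjPair

variable {V : Type*} {G : SimpleGraph V}

abbrev AdjPair (G : SimpleGraph V) := {q : V × V // G.Adj q.1 q.2}

def AdjPair.swap (G : SimpleGraph V) : AdjPair G ≃ AdjPair G :=
  (Equiv.prodComm V V).subtypeEquiv fun q => G.adj_comm q.1 q.2

def AdjPair.equivSigma (G : SimpleGraph V) : AdjPair G ≃ Σ v : V, G.neighborSet v where
  toFun q := ⟨q.1.2, q.1.1, q.2.symm⟩
  invFun s := ⟨(s.2.1, s.1), s.2.2.symm⟩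

theorem summable_adjPair_snd (hlf : LocFin G) (hbd : BddDeg G) {g : V → ℝ}
    (hg0 : ∀ v, 0 ≤ g v) (hg : Summable g) : Summable fun q : AdjPair G => g q.1.2 := by
  obtain ⟨D, hdeg⟩ := hbd
  rw [← (AdjPair.equivSigma G).symm.summable_iff]
  change Summable fun s : Σ v : V, G.neighborSet v => g s.1
  rw [summable_sigma_of_nonneg fun _ => hg0 _]
  have := fun v => (hlf v).to_subtype
  refine ⟨fun v => .of_finite, ?_⟩
  refine .of_nonneg_of_le (fun v => tsum_nonneg fun _ => hg0 v) (fun v => ?_)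
    (hg.mul_left (D : ℝ))
  simp only [tsum_const, Nat.card_coe_set_eq, nsmul_eq_mul]
  exact mul_le_mul_of_nonneg_right (by exact_mod_cast hdeg v) (hg0 v)

theorem pLaplacian_eq_tsum_neighborSet (p : ℝ) (f : V → ℝ) (v : V) :
    pLaplacian G p f v = ∑' u : G.neighborSet v, signedPow p (f u - f v) := by
  rw [pLaplacian, tsum_subtype (G.neighborSet v) fun u => signedPow p (f u - f v)]
  congr 1 with u
  simp only [Set.indicator_apply, SimpleGraph.mem_neighborSet, G.adj_comm v u, signedPow]

theorem IsPHarmonic.tsum_adjPair_mul_signedPow_eq_zero {p : ℝ} {f : V → ℝ}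
    (hharm : IsPHarmonic G p f) {g : V → ℝ}
    (hs : Summable fun q : AdjPair G => g q.1.2 * signedPow p (f q.1.1 - f q.1.2)) :
    ∑' q : AdjPair G, g q.1.2 * signedPow p (f q.1.1 - f q.1.2) = 0 := by
  have hσ : Summable fun s : Σ v, G.neighborSet v => g s.1 * signedPow p (f s.2 - f s.1) :=
    (AdjPair.equivSigma G).symm.summable_iff.2 hs
  rw [← (AdjPair.equivSigma G).symm.tsum_eq]
  change ∑' s : Σ v, G.neighborSet v, g s.1 * signedPow p (f s.2 - f s.1) = 0
  rw [hσ.tsum_sigma]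
  refine (tsum_congr fun v => ?_).trans tsum_zero
  change ∑' u : G.neighborSet v, g v * signedPow p (f u - f v) = 0
  rw [tsum_mul_left, ← pLaplacian_eq_tsum_neighborSet, hharm v, mul_zero]

theorem summable_adjPair_mul_signedPow (hlf : LocFin G) (hbd : BddDeg G) {p : ℝ} (hp : 1 < p)
    {f g : V → ℝ} (hD : DirichletSummable G p f) (hg : Summable fun v => |g v| ^ p) :
    Summable fun q : AdjPair G => g q.1.2 * signedPow p (f q.1.1 - f q.1.2) := by
  have hpq := Real.HolderConjugate.conjExponent hp
  refine .of_norm_bounded (g := fun q : AdjPair G =>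
    |g q.1.2| ^ p / p + |f q.1.1 - f q.1.2| ^ p / p.conjExponent) ?_
    fun q => abs_mul_signedPow_le hpq _ _
  exact ((summable_adjPair_snd hlf hbd (fun _ => by positivity) hg).div_const p).add
    (hD.div_const _)

theorem tsum_adjPair_abs_sub_rpow_eq_zero (hlf : LocFin G) (hbd : BddDeg G) {p : ℝ} (hp : 1 < p)
    {f : V → ℝ} (hharm : IsPHarmonic G p f) (hD : DirichletSummable G p f)
    (hf : Summable fun v => |f v| ^ p) :
    ∑' q : AdjPair G, |f q.1.1 - f q.1.2| ^ p = 0 := by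
  set φ := fun q : AdjPair G => signedPow p (f q.1.1 - f q.1.2)
  have hsnd : Summable fun q => f q.1.2 * φ q := summable_adjPair_mul_signedPow hlf hbd hp hD hf
  have hφ_swap : ∀ q, φ (AdjPair.swap G q) = -φ q := fun q => by
    simp only [φ, ← signedPow_neg, neg_sub]; rfl
  have hfst_swap : (fun q => f q.1.1 * φ q) ∘ AdjPair.swap G = fun q => -(f q.1.2 * φ q) := by
    ext q; simp only [Function.comp_apply, hφ_swap, mul_neg]; rfl
  have hfst : Summable fun q => f q.1.1 * φ q := by
    rw [← (AdjPair.swap G).summable_iff, hfst_swap]; exact hsnd.neg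
  have hzero_snd := hharm.tsum_adjPair_mul_signedPow_eq_zero hsnd
  have hzero_fst : ∑' q, f q.1.1 * φ q = 0 := by
    rw [← (AdjPair.swap G).tsum_eq, ← Function.comp_def (fun q => f q.1.1 * φ q), hfst_swap,
      tsum_neg, hzero_snd, neg_zero]
  calc ∑' q : AdjPair G, |f q.1.1 - f q.1.2| ^ p = ∑' q, (f q.1.1 * φ q - f q.1.2 * φ q) := by
        congr 1 with q
        rw [← sub_mul, mul_signedPow_self (by linarith)]
    _ = 0 := by rw [hfst.tsum_sub hsnd, hzero_fst, hzero_snd, sub_zero]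

end AdjPair

theorem SimpleGraph.Connected.exists_forall_eq_of_adj {V α : Type*} {G : SimpleGraph V}
    (hG : G.Connected) {f : V → α} (h : ∀ ⦃u v⦄, G.Adj u v → f u = f v) :
    ∃ c, ∀ v, f v = c := by
  obtain ⟨v₀⟩ := hG.nonempty
  refine ⟨f v₀, fun v => (hG.preconnected v v₀).elim fun w => ?_⟩
  induction w with
  | nil => rfl
  | cons hadj _ ih => exact (h hadj).trans ih

/-- A `p`-harmonic, `p`-Dirichlet function in `ℓ^p(V)` is constant. -/
theorem pharmonic_lp_constant {V : Type*} (p : ℝ) (hp : 1 < p) (G : SimpleGraph V)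
    (hconn : G.Connected) (hlf : LocFin G) (hbd : BddDeg G) (f : V → ℝ)
    (hharm : IsPHarmonic G p f) (hD : DirichletSummable G p f)
    (hf : Summable fun v => |f v| ^ p) :
    ∃ c : ℝ, ∀ v, f v = c := by
  have henergy := tsum_adjPair_abs_sub_rpow_eq_zero hlf hbd hp hharm hD hf
  refine hconn.exists_forall_eq_of_adj fun u v huv => ?_
  have hle : |f u - f v| ^ p ≤ 0 :=
    henergy ▸ hD.le_tsum ⟨(u, v), huv⟩ fun _ _ => by positivity
  have hzero : |f u - f v| ^ p = 0 := le_antisymm hle (by positivity)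
  rwa [Real.rpow_eq_zero (abs_nonneg _) (by linarith), abs_eq_zero, sub_eq_zero] at hzero
end

section
/- Let p > 1 and let G = (V,E) be a connected, locally finite simple graph with uniformly bounded vertex degrees. Let f, g : V → ℝ satisfy D_p(f) < ∞, g ∈ ℓ^p(V), and Δ_p f ∈ ℓ^{p'}(V), where p' = p/(p−1). Then the function t ↦ D_p(f + t·g) is differentiable at t = 0 with derivative equal to −p·⟨g, Δ_p f⟩. -/
open Filter Topology Metric
open scoped ENNReal Classical

/-!
Over oriented edges `q = (u, v)`, `D_p(f + t g) = ½ ∑_q |df q + t dg q| ^ p` with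
`df q = f u - f v`. For `|t| ≤ 1` the termwise derivatives are dominated by
`p (|df| + |dg|) ^ (p - 1) |dg|`, which is summable by Hölder because bounded degree puts `dg`
in `ℓ^p` of the edges; so the series may be differentiated termwise. At `t = 0` this gives
`(p / 2) ∑_q φ (df q) (g u - g v)` with the odd function `φ x = |x| ^ (p - 2) x`. Reversing
edges turns the `g v` half into a copy of the `g u` half, and grouping edges by their tail `u`
yields `∑_u g u ∑_{v ~ u} φ (f u - f v) = -⟨g, Δ_p f⟩`.
-/

namespace Real

variable {ι : Type*} {p : ℝ}

theorem abs_abs_rpow_sub_two_mul_self (hp : 1 < p) (x : ℝ) :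
    |(|x| ^ (p - 2) * x)| = |x| ^ (p - 1) := by
  rcases eq_or_ne x 0 with rfl | hx
  · simp [zero_rpow (by linarith : p - 1 ≠ 0)]
  · rw [abs_mul, abs_of_nonneg (rpow_nonneg (abs_nonneg x) _),
      show p - 1 = (p - 2) + 1 by ring, rpow_add_one (abs_ne_zero.2 hx)]

theorem summable_rpow_sub_one_mul (hp : 1 < p) {A B : ι → ℝ} (hA : ∀ i, 0 ≤ A i)
    (hB : ∀ i, 0 ≤ B i) (hAp : Summable fun i => A i ^ p) (hBp : Summable fun i => B i ^ p) :
    Summable fun i => A i ^ (p - 1) * B i := by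
  have hpow : ∀ i, (A i ^ (p - 1)) ^ p.conjExponent = A i ^ p := fun i => by
    rw [← rpow_mul (hA i), conjExponent, mul_div_cancel₀ p (by linarith : p - 1 ≠ 0)]
  exact summable_mul_of_Lp_Lq_of_nonneg (HolderConjugate.conjExponent hp).symm
    (fun i => rpow_nonneg (hA i) _) hB (by simpa only [hpow] using hAp) hBp

theorem summable_abs_sub_rpow (hp : 1 ≤ p) {a b : ι → ℝ} (ha : Summable fun i => |a i| ^ p)
    (hb : Summable fun i => |b i| ^ p) : Summable fun i => |a i - b i| ^ p :=
  (summable_Lp_add_of_nonneg hp (fun i => abs_nonneg (a i)) (fun i => abs_nonneg (b i)) ha hb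
    ).of_nonneg_of_le (fun i => rpow_nonneg (abs_nonneg _) _)
    fun i => rpow_le_rpow (abs_nonneg _) (abs_sub _ _) (by linarith)

theorem norm_deriv_abs_add_mul_rpow_le (hp : 1 < p) {a b t : ℝ} (ht : |t| ≤ 1) :
    ‖p * |a + t * b| ^ (p - 2) * (a + t * b) * b‖ ≤ p * ((|a| + |b|) ^ (p - 1) * |b|) := by
  have hab : |a + t * b| ≤ |a| + |b| :=
    (abs_add_le _ _).trans (add_le_add_right (by
      rw [abs_mul]; exact mul_le_of_le_one_left (abs_nonneg b) ht) _)
  rw [norm_eq_abs, mul_assoc, mul_assoc, abs_mul, abs_of_pos (by linarith : 0 < p),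
    ← mul_assoc, abs_mul, abs_abs_rpow_sub_two_mul_self hp]
  gcongr

theorem hasDerivAt_tsum_abs_add_mul_rpow (hp : 1 < p) {a b : ι → ℝ}
    (ha : Summable fun i => |a i| ^ p) (hb : Summable fun i => |b i| ^ p) :
    HasDerivAt (fun t : ℝ => ∑' i, |a i + t * b i| ^ p)
      (p * ∑' i, |a i| ^ (p - 2) * a i * b i) 0 := by
  have hdom : Summable fun i => p * ((|a i| + |b i|) ^ (p - 1) * |b i|) :=
    (summable_rpow_sub_one_mul hp (fun i => by positivity) (fun i => abs_nonneg _)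
      (summable_Lp_add_of_nonneg hp.le (fun i => abs_nonneg _) (fun i => abs_nonneg _) ha hb)
      hb).mul_left p
  have hderiv : ∀ i t, HasDerivAt (fun t : ℝ => |a i + t * b i| ^ p)
      (p * |a i + t * b i| ^ (p - 2) * (a i + t * b i) * b i) t := fun i t =>
    (hasDerivAt_abs_rpow _ hp).comp t (((hasDerivAt_id t).mul_const (b i)).const_add (a i)
      |>.congr_deriv (one_mul _))
  have h0 : (0 : ℝ) ∈ Set.Ioo (-1) 1 := by norm_num
  have key := hasDerivAt_tsum_of_isPreconnected hdom isOpen_Ioo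
    (convex_Ioo (-1 : ℝ) 1).isPreconnected (fun i t _ => hderiv i t)
    (fun i t ht => norm_deriv_abs_add_mul_rpow_le hp (abs_le.2 ⟨ht.1.le, ht.2.le⟩)) h0
    (by simpa using ha) h0
  simpa [← tsum_mul_left, mul_assoc] using key

end Real

namespace SimpleGraph

variable {V : Type*} (G : SimpleGraph V)

abbrev OrientedEdge : Type _ := {q : V × V // G.Adj q.1 q.2}

def OrientedEdge.reverse : G.OrientedEdge ≃ G.OrientedEdge where
  toFun q := ⟨q.1.swap, q.2.symm⟩
  invFun q := ⟨q.1.swap, q.2.symm⟩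
  left_inv _ := rfl
  right_inv _ := rfl

def orientedEdgeEquivSigma : G.OrientedEdge ≃ Σ v, G.neighborSet v where
  toFun q := ⟨q.1.1, q.1.2, q.2⟩
  invFun x := ⟨(x.1, x.2), x.2.2⟩
  left_inv _ := rfl
  right_inv _ := rfl

variable {G}

theorem summable_comp_fst_of_bddDeg (hlf : LocFin G) (hbd : BddDeg G) {c : V → ℝ}
    (hc : ∀ v, 0 ≤ c v) (hsum : Summable c) :
    Summable fun q : G.OrientedEdge => c q.1.1 := by
  obtain ⟨D, hD⟩ := hbd
  have : ∀ v, Finite (G.neighborSet v) := fun v => (hlf v).to_subtype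
  refine (G.orientedEdgeEquivSigma.symm.summable_iff (f := fun q => c q.1.1)).1 ?_
  refine (summable_sigma_of_nonneg fun x => hc x.1).2 ⟨fun v => .of_finite, ?_⟩
  refine (hsum.mul_left (D : ℝ)).of_nonneg_of_le (fun v => tsum_nonneg fun _ => hc v) fun v => ?_
  have hcard : Nat.card (G.neighborSet v) = (G.neighborSet v).ncard := Nat.card_coe_set_eq _
  simp only [tsum_const, hcard, nsmul_eq_mul]
  exact mul_le_mul_of_nonneg_right (by exact_mod_cast hD v) (hc v)

theorem summable_comp_snd_of_bddDeg (hlf : LocFin G) (hbd : BddDeg G) {c : V → ℝ}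
    (hc : ∀ v, 0 ≤ c v) (hsum : Summable c) :
    Summable fun q : G.OrientedEdge => c q.1.2 :=
  (OrientedEdge.reverse G).summable_iff.2 (summable_comp_fst_of_bddDeg hlf hbd hc hsum)

theorem tsum_neighborSet_eq_neg_pLaplacian (p : ℝ) (f : V → ℝ) (v : V) :
    ∑' u : G.neighborSet v, |f v - f u| ^ (p - 2) * (f v - f u) = -pLaplacian G p f v := by
  rw [tsum_subtype (G.neighborSet v) fun u => |f v - f u| ^ (p - 2) * (f v - f u), pLaplacian,
    ← tsum_neg]
  refine tsum_congr fun u => ?_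
  by_cases h : G.Adj v u
  · simp [Set.indicator_of_mem (show u ∈ G.neighborSet v from h), h.symm, abs_sub_comm]
    ring
  · simp [G.adj_comm, h]

theorem tsum_orientedEdge_mul_sub_eq_pLaplacian (p : ℝ) (f g : V → ℝ)
    (hsum : Summable fun q : G.OrientedEdge =>
      |f q.1.1 - f q.1.2| ^ (p - 2) * (f q.1.1 - f q.1.2) * g q.1.1) :
    ∑' q : G.OrientedEdge,
        |f q.1.1 - f q.1.2| ^ (p - 2) * (f q.1.1 - f q.1.2) * (g q.1.1 - g q.1.2)
      = -2 * ∑' v, g v * pLaplacian G p f v := by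
  set T : G.OrientedEdge → ℝ := fun q => |f q.1.1 - f q.1.2| ^ (p - 2) * (f q.1.1 - f q.1.2)
  have hreverse : ∀ q, T (OrientedEdge.reverse G q) = -T q := fun q => by
    simp only [T, OrientedEdge.reverse, Equiv.coe_fn_mk, Prod.fst_swap, Prod.snd_swap,
      abs_sub_comm (f q.1.2)]
    ring
  have hsumT : Summable fun q => T q * g q.1.1 := hsum
  have hsnd : ∑' q, T q * g q.1.2 = -∑' q, T q * g q.1.1 := by
    rw [← (OrientedEdge.reverse G).tsum_eq, ← tsum_neg]
    exact tsum_congr fun q => by rw [hreverse, neg_mul]; rfl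
  have hfst : ∑' q, T q * g q.1.1 = -∑' v, g v * pLaplacian G p f v := by
    set e := G.orientedEdgeEquivSigma.symm
    have hσ : Summable fun c => T (e c) * g (e c).1.1 := e.summable_iff.2 hsumT
    rw [← e.tsum_eq, hσ.tsum_sigma, ← tsum_neg]
    refine tsum_congr fun v => ?_
    change ∑' u : G.neighborSet v, |f v - f u| ^ (p - 2) * (f v - f u) * g v = _
    rw [tsum_mul_right, tsum_neighborSet_eq_neg_pLaplacian]
    ring
  have hsum' : Summable fun q => T q * g q.1.2 :=
    (OrientedEdge.reverse G).summable_iff.1 <| hsumT.neg.congr fun q => by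
      rw [Function.comp_apply, hreverse, neg_mul]; rfl
  calc ∑' q, T q * (g q.1.1 - g q.1.2) = ∑' q, T q * g q.1.1 - ∑' q, T q * g q.1.2 := by
        simp only [mul_sub]; exact hsumT.tsum_sub hsum'
    _ = _ := by rw [hsnd, hfst]; ring

end SimpleGraph

theorem hasDerivAt_dirichletEnergy_general {V : Type*} (p : ℝ) (hp : 1 < p) (G : SimpleGraph V)
    (hlf : LocFin G) (hbd : BddDeg G) (f g : V → ℝ)
    (hD : DirichletSummable G p f) (hg : Summable fun v => |g v| ^ p) :
    HasDerivAt (fun t : ℝ => dirichletEnergy G p fun v => f v + t * g v)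
      (-p * ∑' v, g v * pLaplacian G p f v) 0 := by
  have hg_nonneg : ∀ v, 0 ≤ |g v| ^ p := fun v => by positivity
  have hg_fst := SimpleGraph.summable_comp_fst_of_bddDeg hlf hbd hg_nonneg hg
  have hg_snd := SimpleGraph.summable_comp_snd_of_bddDeg hlf hbd hg_nonneg hg
  have hdg : Summable fun q : G.OrientedEdge => |g q.1.1 - g q.1.2| ^ p :=
    Real.summable_abs_sub_rpow hp.le hg_fst hg_snd
  have hpairing : Summable fun q : G.OrientedEdge =>
      |f q.1.1 - f q.1.2| ^ (p - 2) * (f q.1.1 - f q.1.2) * g q.1.1 :=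
    .of_norm_bounded (Real.summable_rpow_sub_one_mul hp (fun _ => abs_nonneg _)
      (fun _ => abs_nonneg _) hD hg_fst) fun q => by
        rw [Real.norm_eq_abs, abs_mul, Real.abs_abs_rpow_sub_two_mul_self hp]
  have key := (Real.hasDerivAt_tsum_abs_add_mul_rpow hp hD hdg).const_mul (1 / 2 : ℝ)
  rw [SimpleGraph.tsum_orientedEdge_mul_sub_eq_pLaplacian p f g hpairing] at key
  simp only [dirichletEnergy, add_sub_add_comm, ← mul_sub]
  exact key.congr_deriv (by ring)

/-- `t ↦ D_p(f + t g)` is differentiable at `t = 0` with derivative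
`-p ⟨g, Δ_p f⟩`. -/
theorem hasDerivAt_dirichletEnergy {V : Type*} (p : ℝ) (hp : 1 < p) (G : SimpleGraph V)
    (hconn : G.Connected) (hlf : LocFin G) (hbd : BddDeg G) (f g : V → ℝ)
    (hD : DirichletSummable G p f) (hg : Summable fun v => |g v| ^ p)
    (hΔ : Summable fun v => |pLaplacian G p f v| ^ (p / (p - 1))) :
    HasDerivAt (fun t : ℝ => dirichletEnergy G p fun v => f v + t * g v)
      (-p * ∑' v, g v * pLaplacian G p f v) 0 :=
  hasDerivAt_dirichletEnergy_general p hp G hlf hbd f g hD hg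
end

section
/- Let p > 1 and let G = (V,E) be an infinite, connected, locally finite simple graph with uniformly bounded vertex degrees. Let f, g : V → ℝ satisfy D_p(f) < ∞, Δ_p f ∈ ℓ^{p'}(V) (where p' = p/(p−1)), g ∈ ℓ^p(V), and g not identically zero. Then D_p(f + g) > D_p(f) − p·⟨g, Δ_p f⟩. -/
open Filter Topology Metric
open scoped ENNReal Classical

/-!
The function `t ↦ |t| ^ p` is strictly convex with derivative `p |t| ^ (p - 2) t`, so on every
oriented edge `(u, v)`, writing `df = f u - f v`,
`|df + dg| ^ p ≥ |df| ^ p + p |df| ^ (p - 2) df dg`, strictly where `dg ≠ 0`.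
Summing over oriented edges and summing by parts, `∑ |df| ^ (p - 2) df dg = -2 ⟨g, Δ_p f⟩`,
gives `2 D_p(f + g) ≥ 2 D_p(f) - 2p ⟨g, Δ_p f⟩`.
All these sums converge absolutely because `|df| ^ (p - 1) |h| ≤ |df| ^ p + |h| ^ p` and the
degrees are bounded. The inequality is strict because a nonzero `g ∈ ℓ^p` on an infinite
connected graph is not constant, hence `dg ≠ 0` on some edge.
-/

open Set

section RpowInequalities

variable {p : ℝ}

theorem abs_rpow_sub_two_mul_abs (hp : p ≠ 1) (x : ℝ) :
    |x| ^ (p - 2) * |x| = |x| ^ (p - 1) := by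
  rw [← Real.rpow_add_one' (abs_nonneg x) (by contrapose! hp; linarith)]
  ring_nf

theorem abs_abs_rpow_sub_two_mul (hp : p ≠ 1) (x : ℝ) :
    |(|x| ^ (p - 2) * x)| = |x| ^ (p - 1) := by
  rw [abs_mul, abs_of_nonneg (by positivity), abs_rpow_sub_two_mul_abs hp]

theorem strictMono_abs_rpow_sub_two_mul (hp : 1 < p) :
    StrictMono fun x : ℝ => |x| ^ (p - 2) * x := by
  refine strictMono_of_odd_strictMonoOn_nonneg (fun x => by simp only [abs_neg, mul_neg]) ?_
  refine (Real.strictMonoOn_rpow_Ici_of_exponent_pos (sub_pos.2 hp)).congr fun x hx => ?_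
  rw [← abs_of_nonneg (mem_Ici.1 hx), abs_abs, abs_rpow_sub_two_mul_abs hp.ne']

theorem strictConvexOn_abs_rpow (hp : 1 < p) : StrictConvexOn ℝ univ fun x : ℝ => |x| ^ p := by
  have hderiv : deriv (fun x : ℝ => |x| ^ p) = fun x => p * (|x| ^ (p - 2) * x) :=
    funext fun x => by rw [(hasDerivAt_abs_rpow x hp).deriv, mul_assoc]
  refine StrictMono.strictConvexOn_univ_of_deriv
    (continuous_abs.rpow_const fun _ => .inr (by linarith)) ?_
  rw [hderiv]
  exact (strictMono_abs_rpow_sub_two_mul hp).const_mul (by linarith)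

theorem StrictConvexOn.add_mul_lt_of_hasDerivAt {S : Set ℝ} {f : ℝ → ℝ} {a b f' : ℝ}
    (hf : StrictConvexOn ℝ S f) (ha : a ∈ S) (hab : a + b ∈ S) (hb : b ≠ 0)
    (hf' : HasDerivAt f f' a) : f a + f' * b < f (a + b) := by
  rcases hb.lt_or_gt with hb | hb
  · have h := hf.slope_lt_of_hasDerivAt hab ha (by linarith) hf'
    rw [slope_def_field, div_lt_iff₀ (by linarith), show a - (a + b) = -b by ring] at h
    linarith
  · have h := hf.lt_slope_of_hasDerivAt ha hab (by linarith) hf'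
    rw [slope_def_field, lt_div_iff₀ (by linarith), show a + b - a = b by ring] at h
    linarith

theorem abs_rpow_add_mul_lt (hp : 1 < p) (a : ℝ) {b : ℝ} (hb : b ≠ 0) :
    |a| ^ p + p * |a| ^ (p - 2) * a * b < |a + b| ^ p :=
  (strictConvexOn_abs_rpow hp).add_mul_lt_of_hasDerivAt (mem_univ a) (mem_univ _) hb
    (hasDerivAt_abs_rpow a hp)

theorem abs_rpow_add_mul_le (hp : 1 < p) (a b : ℝ) :
    |a| ^ p + p * |a| ^ (p - 2) * a * b ≤ |a + b| ^ p := by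
  rcases eq_or_ne b 0 with rfl | hb
  · simp
  · exact (abs_rpow_add_mul_lt hp a hb).le

theorem rpow_sub_one_mul_le_rpow_add_rpow (hp : 1 ≤ p) {x y : ℝ} (hx : 0 ≤ x) (hy : 0 ≤ y) :
    x ^ (p - 1) * y ≤ x ^ p + y ^ p := by
  have hpow : ∀ z : ℝ, 0 ≤ z → z ^ (p - 1) * z = z ^ p := fun z hz => by
    rw [← Real.rpow_add_one' hz (by linarith), sub_add_cancel]
  rcases le_total y x with hyx | hxy
  · calc x ^ (p - 1) * y ≤ x ^ (p - 1) * x := by gcongr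
      _ ≤ x ^ p + y ^ p := by rw [hpow x hx]; exact le_add_of_nonneg_right (by positivity)
  · calc x ^ (p - 1) * y ≤ y ^ (p - 1) * y := by gcongr
      _ ≤ x ^ p + y ^ p := by rw [hpow y hy]; exact le_add_of_nonneg_left (by positivity)

theorem abs_add_rpow_le (hp : 1 ≤ p) (a b : ℝ) :
    |a + b| ^ p ≤ 2 ^ (p - 1) * (|a| ^ p + |b| ^ p) :=
  calc |a + b| ^ p ≤ (|a| + |b|) ^ p := by gcongr; exact abs_add_le a b
    _ ≤ 2 ^ (p - 1) * (|a| ^ p + |b| ^ p) := by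
      exact_mod_cast NNReal.rpow_add_le_mul_rpow_add_rpow ‖a‖₊ ‖b‖₊ hp

theorem summable_abs_rpow_sub_two_mul_mul {ι : Type*} (hp : 1 < p) {a c : ι → ℝ}
    (ha : Summable fun i => |a i| ^ p) (hc : Summable fun i => |c i| ^ p) :
    Summable fun i => |a i| ^ (p - 2) * a i * c i :=
  (ha.add hc).of_norm_bounded fun i => by
    rw [Real.norm_eq_abs, abs_mul, abs_abs_rpow_sub_two_mul hp.ne']
    exact rpow_sub_one_mul_le_rpow_add_rpow hp.le (abs_nonneg _) (abs_nonneg _)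

end RpowInequalities

namespace SimpleGraph

variable {V : Type*} (G : SimpleGraph V)

abbrev AdjPairs : Type _ := {q : V × V // G.Adj q.1 q.2}

def adjPairsSwap : Equiv.Perm G.AdjPairs :=
  Function.Involutive.toPerm (fun q => ⟨q.1.swap, q.2.symm⟩) fun _ => rfl

def adjPairsEquivSigma : G.AdjPairs ≃ Σ u, G.neighborSet u :=
  Equiv.subtypeProdEquivSigmaSubtype fun u v => G.Adj u v

theorem Reachable.eq_of_forall_adj_eq {α : Type*} {G : SimpleGraph V} {g : V → α}
    (hg : ∀ u v, G.Adj u v → g u = g v) {u v : V} (huv : G.Reachable u v) : g u = g v := by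
  obtain ⟨w⟩ := huv
  induction w with
  | nil => rfl
  | cons hadj _ ih => exact (hg _ _ hadj).trans ih

theorem Connected.exists_adjPairs_ne_of_summable_rpow [Infinite V] {G : SimpleGraph V}
    (hconn : G.Connected) {p : ℝ} {g : V → ℝ} (hg : Summable fun v => |g v| ^ p)
    (hg0 : g ≠ 0) : ∃ q : G.AdjPairs, g q.1.1 ≠ g q.1.2 := by
  by_contra! hconst
  obtain ⟨v₀, hv₀⟩ := Function.ne_iff.1 hg0
  have hg_eq : ∀ v, g v = g v₀ := fun v =>
    (hconn.preconnected v v₀).eq_of_forall_adj_eq fun u w huw => hconst ⟨(u, w), huw⟩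
  have hzero : |g v₀| ^ p = 0 := (summable_const_iff _).1 (hg.congr fun v => by rw [hg_eq v])
  exact hv₀ (abs_eq_zero.1 ((Real.rpow_eq_zero_iff_of_nonneg (abs_nonneg _)).1 hzero).1)

theorem tsum_mul_sub_eq_two_mul {X : G.AdjPairs → ℝ}
    (hX : ∀ q, X (G.adjPairsSwap q) = -X q) {g : V → ℝ}
    (hs : Summable fun q => X q * g q.1.1) :
    ∑' q, X q * (g q.1.1 - g q.1.2) = 2 * ∑' q, X q * g q.1.1 := by
  have hswap : ∀ q, X (G.adjPairsSwap q) * g (G.adjPairsSwap q).1.1 = -(X q * g q.1.2) :=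
    fun q => by
      change X (G.adjPairsSwap q) * g q.1.2 = _
      rw [hX]
      ring
  have hs' : Summable fun q => X q * g q.1.2 :=
    ((G.adjPairsSwap.summable_iff.2 hs).congr hswap).neg.congr fun q => neg_neg _
  have hsum : ∑' q, X q * g q.1.2 = -∑' q, X q * g q.1.1 := by
    rw [← G.adjPairsSwap.tsum_eq (fun q => X q * g q.1.1), ← tsum_neg]
    exact tsum_congr fun q => by rw [hswap, neg_neg]
  simp_rw [mul_sub]
  rw [hs.tsum_sub hs', hsum]
  ring

variable [G.LocallyFinite]

theorem tsum_adjPairs {F : V → V → ℝ} (hF : Summable fun q : G.AdjPairs => F q.1.1 q.1.2) :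
    ∑' q : G.AdjPairs, F q.1.1 q.1.2 = ∑' u, ∑ v : G.neighborSet u, F u v := by
  rw [← G.adjPairsEquivSigma.symm.tsum_eq, Summable.tsum_sigma]
  · exact tsum_congr fun u => tsum_fintype _
  · exact G.adjPairsEquivSigma.symm.summable_iff.2 hF

theorem summable_adjPairs_fst {D : ℕ} (hD : ∀ u, G.degree u ≤ D) {h : V → ℝ}
    (h0 : ∀ u, 0 ≤ h u) (hs : Summable h) : Summable fun q : G.AdjPairs => h q.1.1 := by
  refine G.adjPairsEquivSigma.symm.summable_iff.1 <|
    (summable_sigma_of_nonneg fun _ => h0 _).2 ⟨fun u => .of_finite,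
      (hs.mul_left (D : ℝ)).of_nonneg_of_le (fun u => tsum_nonneg fun _ => h0 u) fun u => ?_⟩
  change ∑' _ : G.neighborSet u, h u ≤ D * h u
  rw [tsum_fintype, Finset.sum_const, Finset.card_univ, card_neighborSet_eq_degree, nsmul_eq_mul]
  exact mul_le_mul_of_nonneg_right (by exact_mod_cast hD u) (h0 u)

end SimpleGraph

theorem BddDeg.exists_degree_le {V : Type*} {G : SimpleGraph V} [G.LocallyFinite]
    (h : BddDeg G) : ∃ D : ℕ, ∀ v, G.degree v ≤ D := by
  obtain ⟨D, hD⟩ := h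
  refine ⟨D, fun v => ?_⟩
  rw [← G.card_neighborSet_eq_degree, ← Nat.card_eq_fintype_card, Nat.card_coe_set_eq]
  exact hD v

section Energy

variable {V : Type*} (G : SimpleGraph V) {p : ℝ}

theorem dirichletSummable_add (hp : 1 ≤ p) {f g : V → ℝ} (hf : DirichletSummable G p f)
    (hg : DirichletSummable G p g) : DirichletSummable G p fun v => f v + g v :=
  ((hf.add hg).mul_left (2 ^ (p - 1))).of_nonneg_of_le (fun _ => by positivity) fun q => by
    rw [add_sub_add_comm]
    exact abs_add_rpow_le hp _ _

theorem dirichletSummable_of_summable_rpow [G.LocallyFinite] (hp : 1 ≤ p) {D : ℕ}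
    (hD : ∀ u, G.degree u ≤ D) {g : V → ℝ} (hg : Summable fun v => |g v| ^ p) :
    DirichletSummable G p g := by
  have hfst := G.summable_adjPairs_fst hD (fun _ => by positivity) hg
  have hsnd : Summable fun q : G.AdjPairs => |g q.1.2| ^ p := G.adjPairsSwap.summable_iff.2 hfst
  refine ((hfst.add hsnd).mul_left (2 ^ (p - 1))).of_nonneg_of_le (fun _ => by positivity)
    fun q => ?_
  rw [sub_eq_add_neg, ← abs_neg (g q.1.2)]
  exact abs_add_rpow_le hp _ _

theorem pLaplacian_eq_sum [G.LocallyFinite] (f : V → ℝ) (u : V) :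
    pLaplacian G p f u = ∑ v : G.neighborSet u, |f v - f u| ^ (p - 2) * (f v - f u) := by
  rw [pLaplacian, ← tsum_fintype (L := .unconditional _),
    tsum_subtype (G.neighborSet u) fun v => |f v - f u| ^ (p - 2) * (f v - f u)]
  refine tsum_congr fun v => ?_
  simp [Set.indicator, G.adj_comm]

variable [G.LocallyFinite]

theorem tsum_adjPairs_mul_fst_eq_neg_tsum_mul_pLaplacian {f g : V → ℝ}
    (hs : Summable fun q : G.AdjPairs =>
      |f q.1.1 - f q.1.2| ^ (p - 2) * (f q.1.1 - f q.1.2) * g q.1.1) :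
    ∑' q : G.AdjPairs, |f q.1.1 - f q.1.2| ^ (p - 2) * (f q.1.1 - f q.1.2) * g q.1.1 =
      -∑' v, g v * pLaplacian G p f v := by
  rw [G.tsum_adjPairs (F := fun u v => |f u - f v| ^ (p - 2) * (f u - f v) * g u) hs,
    ← tsum_neg]
  refine tsum_congr fun u => ?_
  rw [pLaplacian_eq_sum, Finset.mul_sum, ← Finset.sum_neg_distrib]
  refine Finset.sum_congr rfl fun v _ => ?_
  rw [abs_sub_comm]
  ring

theorem tsum_adjPairs_mul_sub_eq_neg_two_mul_tsum_mul_pLaplacian {f g : V → ℝ}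
    (hs : Summable fun q : G.AdjPairs =>
      |f q.1.1 - f q.1.2| ^ (p - 2) * (f q.1.1 - f q.1.2) * g q.1.1) :
    ∑' q : G.AdjPairs,
        |f q.1.1 - f q.1.2| ^ (p - 2) * (f q.1.1 - f q.1.2) * (g q.1.1 - g q.1.2) =
      -2 * ∑' v, g v * pLaplacian G p f v := by
  rw [G.tsum_mul_sub_eq_two_mul (fun q => ?_) hs,
    tsum_adjPairs_mul_fst_eq_neg_tsum_mul_pLaplacian G hs]
  · ring
  · change |f q.1.2 - f q.1.1| ^ (p - 2) * (f q.1.2 - f q.1.1) = _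
    rw [abs_sub_comm]
    ring

end Energy

theorem dirichletEnergy_strict_convexity_general {V : Type*} [Infinite V] (p : ℝ) (hp : 1 < p)
    (G : SimpleGraph V) (hconn : G.Connected) (hlf : LocFin G) (hbd : BddDeg G)
    (f g : V → ℝ) (hD : DirichletSummable G p f)
    (hg : Summable fun v => |g v| ^ p) (hg0 : g ≠ 0) :
    dirichletEnergy G p (fun v => f v + g v) >
      dirichletEnergy G p f - p * ∑' v, g v * pLaplacian G p f v := by
  let _ : G.LocallyFinite := fun v => (hlf v).fintype
  obtain ⟨D, hdeg⟩ := hbd.exists_degree_le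
  have hdg := dirichletSummable_of_summable_rpow G hp.le hdeg hg
  have hflux : Summable fun q : G.AdjPairs =>
      |f q.1.1 - f q.1.2| ^ (p - 2) * (f q.1.1 - f q.1.2) * g q.1.1 :=
    summable_abs_rpow_sub_two_mul_mul hp hD
      (G.summable_adjPairs_fst hdeg (fun _ => by positivity) hg)
  have hcross := (summable_abs_rpow_sub_two_mul_mul hp hD hdg).mul_left p
  obtain ⟨q₀, hq₀⟩ := hconn.exists_adjPairs_ne_of_summable_rpow hg hg0
  have hlt : ∑' q : G.AdjPairs, (|f q.1.1 - f q.1.2| ^ p +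
        p * (|f q.1.1 - f q.1.2| ^ (p - 2) * (f q.1.1 - f q.1.2) * (g q.1.1 - g q.1.2))) <
      ∑' q : G.AdjPairs, |f q.1.1 + g q.1.1 - (f q.1.2 + g q.1.2)| ^ p := by
    refine Summable.tsum_lt_tsum (i := q₀) (fun q => ?_) ?_ (hD.add hcross)
      (dirichletSummable_add G hp.le hD hdg)
    · rw [add_sub_add_comm, ← mul_assoc, ← mul_assoc]
      exact abs_rpow_add_mul_le hp _ _
    · rw [add_sub_add_comm, ← mul_assoc, ← mul_assoc]
      exact abs_rpow_add_mul_lt hp _ (sub_ne_zero.2 hq₀)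
  rw [hD.tsum_add hcross, tsum_mul_left,
    tsum_adjPairs_mul_sub_eq_neg_two_mul_tsum_mul_pLaplacian G hflux] at hlt
  simp only [dirichletEnergy]
  linarith

/-- strict convexity of the `p`-Dirichlet energy:
`D_p(f + g) > D_p(f) - p ⟨g, Δ_p f⟩` whenever `g ∈ ℓ^p` is not identically zero. -/
theorem dirichletEnergy_strict_convexity {V : Type*} [Infinite V] (p : ℝ) (hp : 1 < p)
    (G : SimpleGraph V) (hconn : G.Connected) (hlf : LocFin G) (hbd : BddDeg G)
    (f g : V → ℝ) (hD : DirichletSummable G p f)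
    (hΔ : Summable fun v => |pLaplacian G p f v| ^ (p / (p - 1)))
    (hg : Summable fun v => |g v| ^ p) (hg0 : g ≠ 0) :
    dirichletEnergy G p (fun v => f v + g v) >
      dirichletEnergy G p f - p * ∑' v, g v * pLaplacian G p f v :=
  dirichletEnergy_strict_convexity_general p hp G hconn hlf hbd f g hD hg hg0
end

section
/- Let d ≥ 1 be an integer, C ≥ 1 a real, and let G = (V,E) be a connected, locally finite simple graph with uniformly bounded vertex degrees. Let (P_v)_{v∈V} be a quasi-sphere packing of G in ℝ^d with constant C such that all the sets P_v are contained in a fixed bounded subset of ℝ^d. Define m : E → (0,∞) by m({u,v}) = diam(P_u) + diam(P_v). Then Σ_{e∈E} m(e)^d < ∞, i.e. m is an L^d metric on G. -/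
open Filter Topology Metric
open scoped ENNReal Classical

/-! The balls `B(z_v, r_v) ⊆ P_v` have disjoint interiors and lie in a fixed bounded set, so
comparing Lebesgue measures gives `∑ r_v ^ d < ∞`, hence `∑ diam (P_v) ^ d < ∞` as
`diam P_v ≤ 2 C r_v`. Since `(a + b) ^ d ≤ 2 ^ (d - 1) (a ^ d + b ^ d)` and every vertex lies on at
most `D` edges, the sum over edges is at most `2 ^ (d - 1) D ∑ diam (P_v) ^ d`. -/

open MeasureTheory Module Function

theorem summable_radius_pow_of_pairwise_disjoint_balls {E ι : Type*} [NormedAddCommGroup E]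
    [NormedSpace ℝ E] [MeasurableSpace E] [BorelSpace E] [FiniteDimensional ℝ E]
    (μ : Measure E) [μ.IsAddHaarMeasure] {z : ι → E} {r : ι → ℝ} (hr : ∀ i, 0 < r i)
    (hdisj : Pairwise (Disjoint on fun i => ball (z i) (r i)))
    (hbdd : Bornology.IsBounded (⋃ i, ball (z i) (r i))) :
    Summable fun i => r i ^ finrank ℝ E := by
  have hvol : (∑' i, ENNReal.ofReal (r i ^ finrank ℝ E)) * μ (ball 0 1) ≠ ∞ := by
    refine (lt_of_le_of_lt ?_ (hbdd.measure_lt_top (μ := μ))).ne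
    calc (∑' i, ENNReal.ofReal (r i ^ finrank ℝ E)) * μ (ball 0 1)
        = ∑' i, μ (ball (z i) (r i)) := by
          simp only [← ENNReal.tsum_mul_right, Measure.addHaar_ball_of_pos μ _ (hr _)]
      _ ≤ μ (⋃ i, ball (z i) (r i)) :=
          tsum_meas_le_meas_iUnion_of_disjoint μ (fun _ => measurableSet_ball) hdisj
  have hsum := ENNReal.summable_toReal
    (ENNReal.lt_top_of_mul_ne_top_left hvol (measure_ball_pos μ 0 one_pos).ne').ne
  simpa only [ENNReal.toReal_ofReal (pow_nonneg (hr _).le _)] using hsum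

theorem IsQuasiSpherePacking.summable_diam_pow {V : Type*} {G : SimpleGraph V} {d : ℕ} {C : ℝ}
    {P : V → Set (EuclideanSpace ℝ (Fin d))} (hP : IsQuasiSpherePacking G d C P)
    (hbdd : Bornology.IsBounded (⋃ v, P v)) :
    Summable fun v => diam (P v) ^ d := by
  obtain ⟨-, ⟨z, r, hzr⟩, hdisj, -⟩ := hP
  have hball_sub : ∀ v, ball (z v) (r v) ⊆ P v := fun v =>
    ball_subset_closedBall.trans (hzr v).2.1
  have hball_sub_interior : ∀ v, ball (z v) (r v) ⊆ interior (P v) := fun v =>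
    interior_maximal (hball_sub v) isOpen_ball
  have hr : Summable fun v => r v ^ d := by
    simpa only [finrank_euclideanSpace_fin] using
      summable_radius_pow_of_pairwise_disjoint_balls volume (fun v => (hzr v).1)
        (fun u v huv => (hdisj huv).mono (hball_sub_interior u) (hball_sub_interior v))
        (hbdd.subset (Set.iUnion_mono hball_sub))
  have hdiam : ∀ v, diam (P v) ≤ 2 * C * r v := by
    intro v
    obtain ⟨hr_pos, hinner, houter⟩ := hzr v
    have hCr : 0 ≤ C * r v :=
      nonempty_closedBall.1 ((nonempty_closedBall.2 hr_pos.le).mono (hinner.trans houter))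
    calc diam (P v) ≤ diam (closedBall (z v) (C * r v)) := diam_mono houter isBounded_closedBall
      _ ≤ 2 * C * r v := by rw [mul_assoc]; exact diam_closedBall hCr
  refine (hr.mul_left ((2 * C) ^ d)).of_nonneg_of_le (fun v => pow_nonneg diam_nonneg d)
    fun v => ?_
  rw [← mul_pow]
  exact pow_le_pow_left₀ diam_nonneg (hdiam v) d

section BoundedDegree

variable {V : Type*} {G : SimpleGraph V} {D : ℕ} {F : V → ℝ}

theorem summable_sigma_neighborSet_fst (hlf : LocFin G) (hD : ∀ v, (G.neighborSet v).ncard ≤ D)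
    (hF0 : ∀ v, 0 ≤ F v) (hF : Summable F) :
    Summable fun x : Σ v, G.neighborSet v => F x.1 := by
  have : ∀ v, Finite (G.neighborSet v) := fun v => (hlf v).to_subtype
  refine (summable_sigma_of_nonneg fun x => hF0 x.1).2 ⟨fun v => .of_finite, ?_⟩
  refine (hF.mul_left (D : ℝ)).of_nonneg_of_le (fun v => tsum_nonneg fun _ => hF0 v) fun v => ?_
  dsimp only
  rw [tsum_const, Nat.card_coe_set_eq, nsmul_eq_mul]
  exact mul_le_mul_of_nonneg_right (by exact_mod_cast hD v) (hF0 v)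

theorem summable_edgeSet_of_le_add (hlf : LocFin G) (hD : ∀ v, (G.neighborSet v).ncard ≤ D)
    (hF0 : ∀ v, 0 ≤ F v) (hF : Summable F) {f : Sym2 V → ℝ} (hf0 : ∀ e ∈ G.edgeSet, 0 ≤ f e)
    (hf : ∀ u v, G.Adj u v → f s(u, v) ≤ F u + F v) :
    Summable fun e : G.edgeSet => f e := by
  have hrep : ∀ e : G.edgeSet, ∃ x : Σ v, G.neighborSet v, s(x.1, x.2.1) = e := by
    rintro ⟨e, he⟩
    induction e using Sym2.ind with
    | _ u v => exact ⟨⟨u, v, he⟩, rfl⟩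
  choose ι hι using hrep
  -- Both orientations of an edge are injective sections into the neighbour sigma type.
  let ι' : G.edgeSet → Σ v, G.neighborSet v := fun e => ⟨(ι e).2, (ι e).1, (ι e).2.2.symm⟩
  have hι' : ∀ e, s((ι' e).1, (ι' e).2.1) = e := fun e => Sym2.eq_swap.trans (hι e)
  have hsummable_of_section : ∀ κ : G.edgeSet → Σ v, G.neighborSet v,
      (∀ e, s((κ e).1, (κ e).2.1) = e) → Summable fun e => F (κ e).1 := fun κ hκ =>
    (summable_sigma_neighborSet_fst hlf hD hF0 hF).comp_injective fun e e' h =>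
      Subtype.ext (by rw [← hκ e, ← hκ e', h])
  refine .of_nonneg_of_le (fun e => hf0 e e.2) (fun e => ?_)
    ((hsummable_of_section ι hι).add (hsummable_of_section ι' hι'))
  rw [← hι e]
  exact hf _ _ (ι e).2.2

end BoundedDegree

theorem packing_metric_Lp_general {V : Type*} (d : ℕ) (C : ℝ)
    (G : SimpleGraph V) (hlf : LocFin G) (hbd : BddDeg G)
    (P : V → Set (EuclideanSpace ℝ (Fin d))) (hP : IsQuasiSpherePacking G d C P)
    (hbounded : Bornology.IsBounded (⋃ v, P v)) :
    Summable fun e : G.edgeSet =>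
      (Sym2.lift ⟨fun u v => Metric.diam (P u) + Metric.diam (P v),
        fun u v => add_comm _ _⟩ (e : Sym2 V)) ^ (d : ℝ) := by
  obtain ⟨D, hD⟩ := hbd
  refine summable_edgeSet_of_le_add (f := fun s => Sym2.lift _ s ^ (d : ℝ)) hlf hD
    (fun v => by positivity) ((hP.summable_diam_pow hbounded).mul_left (2 ^ (d - 1)))
    (fun e _ => ?_) fun u v _ => ?_
  · induction e using Sym2.ind with
    | _ => exact Real.rpow_nonneg (add_nonneg diam_nonneg diam_nonneg) _
  · rw [Sym2.lift_mk, Real.rpow_natCast, ← mul_add]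
    exact add_pow_le diam_nonneg diam_nonneg d

/-- for a bounded quasi-sphere packing of a bounded-degree graph in `ℝ^d`,
the metric `m({u,v}) = diam (P u) + diam (P v)` is an `L^d` metric. -/
theorem packing_metric_Lp {V : Type*} (d : ℕ) (hd : 1 ≤ d) (C : ℝ) (hC : 1 ≤ C)
    (G : SimpleGraph V) (hconn : G.Connected) (hlf : LocFin G) (hbd : BddDeg G)
    (P : V → Set (EuclideanSpace ℝ (Fin d))) (hP : IsQuasiSpherePacking G d C P)
    (hbounded : Bornology.IsBounded (⋃ v, P v)) :
    Summable fun e : G.edgeSet =>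
      (Sym2.lift ⟨fun u v => Metric.diam (P u) + Metric.diam (P v),
        fun u v => add_comm _ _⟩ (e : Sym2 V)) ^ (d : ℝ) :=
  packing_metric_Lp_general d C G hlf hbd P hP hbounded
end
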